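/- arXiv:2512.10599 — 5 statements merged into one kernel-verified Lean document; each statement's English description precedes it below -/
import Mathlib

section
/- Let X be an uncountable set with the co-countable topology. Then X is well-filtered: for every filtered family {F_d : d ∈ D} of nonempty compact saturated sets and every open U with ⋂_{d∈D} F_d ⊆ U, there exists d ∈ D with F_d ⊆ U. -/
/-- The co-countable topology on a type: a set is open iff it is empty or has
countable complement. -/
def cocountableTopology (X : Type*) : TopologicalSpace X where
  IsOpen U := U = ∅ ∨ (Uᶜ : Set X).Countable
  isOpen_univ := Or.inr (by simp)
  isOpen_inter := by
    rintro s t (rfl | hs) ht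
    · simp
    rcases ht with rfl | ht
    · simp
    · right
      rw [Set.compl_inter]
      exact hs.union ht
  isOpen_sUnion := by
    intro S hS
    by_cases h : ∀ s ∈ S, s = ∅
    · left
      exact Set.sUnion_eq_empty.mpr h
    · push_neg at h
      obtain ⟨s, hsS, hs⟩ := h
      right
      rcases hS s hsS with rfl | hc
      · exact (Set.not_nonempty_empty hs).elim
      · exact hc.mono (Set.compl_subset_compl.mpr (Set.subset_sUnion_of_mem hsS))

/-- Type synonym for a type equipped with the co-countable topology. -/
def Cocountable (X : Type*) : Type _ := X

instance (X : Type*) : TopologicalSpace (Cocountable X) := cocountableTopology X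

instance (X : Type*) [Uncountable X] : Uncountable (Cocountable X) := ‹Uncountable X›

/-- A subset of a topological space is saturated if it equals the intersection of
the open sets containing it. -/
def IsSaturatedSet {Y : Type*} [TopologicalSpace Y] (A : Set Y) : Prop :=
  A = ⋂₀ {U : Set Y | IsOpen U ∧ A ⊆ U}

/-!
In the co-countable topology a countably infinite subset of a compact set would be closed, hence
compact, and discrete, which is impossible; so compact sets are finite. A filtered family of finite sets has a
member of least cardinality, and filteredness makes it contained in every other member, hence in
their intersection.
-/

theorem Cocountable.isClosed_of_countable {X : Type*} {s : Set (Cocountable X)}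
    (hs : s.Countable) : IsClosed s :=
  isOpen_compl_iff.1 (Or.inr ((compl_compl s).symm ▸ hs))

theorem IsCompact.finite_of_forall_countable_isClosed {X : Type*} [TopologicalSpace X]
    (hcl : ∀ s : Set X, s.Countable → IsClosed s) {K : Set X} (hK : IsCompact K) : K.Finite := by
  by_contra hinf
  obtain ⟨S, hSK, hSc, hSinf⟩ := Set.Infinite.exists_subset_countable_infinite hinf
  have hSdisc : IsDiscrete S := isDiscrete_iff_forall_mem_exists_isClosed.2 fun t ht =>
    ⟨t, hcl t (hSc.mono ht), Set.inter_eq_left.2 ht⟩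
  exact hSinf ((hK.of_isClosed_subset (hcl S hSc) hSK).finite hSdisc)

theorem Directed.exists_forall_subset_of_finite {ι α : Type*} [Nonempty ι] {F : ι → Set α}
    (hdir : Directed (· ⊇ ·) F) (hfin : ∀ i, (F i).Finite) : ∃ i, ∀ j, F i ⊆ F j := by
  let i₀ := Function.argmin (fun i => (F i).ncard)
  refine ⟨i₀, fun j => ?_⟩
  obtain ⟨k, hk₀, hkj⟩ := hdir i₀ j
  rwa [← Set.eq_of_subset_of_ncard_le hk₀ (Function.argmin_le (fun i => (F i).ncard) k) (hfin i₀)]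

theorem cocountable_wellFiltered_general {X : Type*}
    {D : Type*} [Nonempty D] (F : D → Set (Cocountable X))
    (hcpt : ∀ d, IsCompact (F d))
    (hfil : ∀ d₁ d₂ : D, ∃ d₃ : D, F d₃ ⊆ F d₁ ∩ F d₂)
    (U : Set (Cocountable X)) (hsub : (⋂ d, F d) ⊆ U) :
    ∃ d, F d ⊆ U := by
  have hdir : Directed (· ⊇ ·) F := fun d₁ d₂ =>
    (hfil d₁ d₂).imp fun _ h => Set.subset_inter_iff.1 h
  have hfin : ∀ d, (F d).Finite := fun d =>
    (hcpt d).finite_of_forall_countable_isClosed fun _ => Cocountable.isClosed_of_countable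
  obtain ⟨d, hd⟩ := hdir.exists_forall_subset_of_finite hfin
  exact ⟨d, (Set.subset_iInter hd).trans hsub⟩

/-- An uncountable set with the co-countable topology is
well-filtered. -/
theorem cocountable_wellFiltered {X : Type*} [Uncountable X]
    {D : Type*} [Nonempty D] (F : D → Set (Cocountable X))
    (hne : ∀ d, (F d).Nonempty) (hcpt : ∀ d, IsCompact (F d))
    (hsat : ∀ d, IsSaturatedSet (F d))
    (hfil : ∀ d₁ d₂ : D, ∃ d₃ : D, F d₃ ⊆ F d₁ ∩ F d₂)
    (U : Set (Cocountable X)) (hU : IsOpen U) (hsub : (⋂ d, F d) ⊆ U) :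
    ∃ d, F d ⊆ U :=
  cocountable_wellFiltered_general F hcpt hfil U hsub
end

section
/- For a poset P, the space (P, υ(P)) with the upper topology is sober if and only if every irreducible subset of (P, υ(P)) has a supremum in P. -/
/-!
In the upper topology `closure {x} = ↓x`, and `closure A ⊆ ↓b` exactly when `b` is an upper
bound of `A`; so `closure A = ↓s` says precisely that `s` is the supremum of `A`, provided
`s ∈ closure A`. For irreducible `A` this holds: otherwise a basic neighbourhood of `s` missing
`A` is the complement of a finite union `↓b₁ ∪ ⋯ ∪ ↓bₙ` covering `A`, irreducibility puts `A`
inside a single `↓bᵢ`, and then `s ≤ bᵢ`, a contradiction. Uniqueness of the generic point is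
the T₀ property.
-/

open Topology

/-- A nonempty subset of a topological space is irreducible if whenever it is
covered by a union of two closed sets, it is contained in one of them. -/
def IrredSet {Y : Type*} [TopologicalSpace Y] (A : Set Y) : Prop :=
  A.Nonempty ∧ ∀ F₁ F₂ : Set Y, IsClosed F₁ → IsClosed F₂ → A ⊆ F₁ ∪ F₂ →
    A ⊆ F₁ ∨ A ⊆ F₂

open Set

lemma irredSet_iff_isIrreducible {Y : Type*} [TopologicalSpace Y] {A : Set Y} :
    IrredSet A ↔ IsIrreducible A := by
  rw [IrredSet, IsIrreducible, isPreirreducible_iff_isClosed_union_isClosed]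

lemma IsIrreducible.exists_subset_of_subset_biUnion {X ι : Type*} [TopologicalSpace X]
    {s : Set X} (hs : IsIrreducible s) {t : Set ι} (ht : t.Finite) {f : ι → Set X}
    (hf : ∀ i ∈ t, IsClosed (f i)) (hst : s ⊆ ⋃ i ∈ t, f i) : ∃ i ∈ t, s ⊆ f i := by
  classical
  obtain ⟨_, hz, hsz⟩ := isIrreducible_iff_sUnion_isClosed.1 hs (ht.toFinset.image f)
    (by simpa using hf) (by simpa [sUnion_image] using hst)
  obtain ⟨i, hi, rfl⟩ := Finset.mem_image.1 hz
  exact ⟨i, ht.mem_toFinset.1 hi, hsz⟩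

lemma isLUB_of_closure_eq_Iic {α : Type*} [Preorder α] [TopologicalSpace α]
    [ClosedIicTopology α] {A : Set α} {s : α} (h : closure A = Iic s) : IsLUB A s :=
  (isLUB_congr (upperBounds_closure A)).1 (h ▸ isLUB_Iic)

namespace Topology.IsUpper

variable {α : Type*} [Preorder α] [TopologicalSpace α] [IsUpper α] {A : Set α} {s : α}

lemma mem_closure_of_isLUB (hA : IsIrreducible A) (hs : IsLUB A s) : s ∈ closure A := by
  by_contra hsA
  obtain ⟨_, ⟨t, ht, rfl⟩, hst, htA⟩ :=
    IsUpper.isTopologicalBasis.exists_subset_of_mem_open hsA isClosed_closure.isOpen_compl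
  have hAt : A ⊆ ⋃ b ∈ t, Iic b := by
    rw [← coe_lowerClosure]
    exact subset_closure.trans (compl_subset_compl.1 htA)
  obtain ⟨b, hbt, hAb⟩ := hA.exists_subset_of_subset_biUnion ht (fun b _ => isClosed_Iic) hAt
  exact hst ⟨b, hbt, hs.2 hAb⟩

lemma closure_eq_Iic_of_isLUB (hA : IsIrreducible A) (hs : IsLUB A s) : closure A = Iic s := by
  refine (closure_minimal (show A ⊆ Iic s from hs.1) isClosed_Iic).antisymm ?_
  rw [← closure_singleton]
  exact closure_minimal (singleton_subset_iff.2 (mem_closure_of_isLUB hA hs)) isClosed_closure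

end Topology.IsUpper

/-- `(P, υ(P))` is sober iff every irreducible subset of
`(P, υ(P))` has a supremum in `P`. -/
theorem upper_sober_iff_irreducible_complete {P : Type*} [PartialOrder P] :
    (∀ A : Set (WithUpper P), IrredSet A → IsClosed A → ∃! x, A = closure {x}) ↔
      (∀ A : Set (WithUpper P), IrredSet A → ∃ s, IsLUB A s) := by
  simp only [irredSet_iff_isIrreducible]
  constructor
  · intro hsober A hA
    obtain ⟨s, hs, -⟩ := hsober (closure A) hA.closure isClosed_closure
    exact ⟨s, isLUB_of_closure_eq_Iic (hs.trans (IsUpper.closure_singleton s))⟩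
  · intro hlub A hA hAc
    obtain ⟨s, hs⟩ := hlub A hA
    have hAs : A = closure {s} := by
      rw [IsUpper.closure_singleton, ← IsUpper.closure_eq_Iic_of_isLUB hA hs, hAc.closure_eq]
    exact ⟨s, hAs, fun y hy => (inseparable_iff_closure_eq.2 (hy.symm.trans hAs)).eq⟩
end

section
/- For a sup-complete poset P, the space (P, υ(P)) with the upper topology is a strong R-space: for every nonempty family {K_i : i ∈ I} of nonempty compact saturated subsets of (P, υ(P)) and every open set U, ⋂_{i∈I} K_i ⊆ U implies ⋂_{i∈I₀} K_i ⊆ U for some finite I₀ ⊆ I. -/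
/-!
Limits of a filter in the upper topology are closed under existing suprema, so with
sup-completeness any nonempty intersection of compact upper sets is again compact; in particular
the finite intersections of the `K i` form a directed family of compact upper sets.

For such a family `Q` with no member inside the open set `U`, Zorn's lemma gives a minimal `a`
such that `↓a` meets every `Q k \ U` (a chain is bounded below by the supremum of its lower bounds,
which exist by compactness). As each `Q k` is upper, `a ∈ ⋂ Q k ⊆ U`, so `a` has a basic
neighbourhood `(↓T)ᶜ ⊆ U` with `T` finite. Some `t ∈ T` then still has `↓a ∩ ↓t` meeting every
`Q k \ U`, and minimality forces `a ≤ sup (↓a ∩ ↓t) ≤ t`, contradicting `a ∉ ↓T`.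
-/

open Topology

open Set

section ClosedIic

variable {α : Type*} [Preorder α] [TopologicalSpace α] [ClosedIicTopology α]

theorem IsChain.exists_mem_lowerBounds_of_isCompact {c : Set α} (hc : IsChain (· ≤ ·) c)
    (hne : c.Nonempty) {D : Set α} (hD : IsCompact D) (h : ∀ a ∈ c, (Iic a ∩ D).Nonempty) :
    ∃ w ∈ D, w ∈ lowerBounds c := by
  by_contra! hno
  have := hne.to_subtype
  have hdir : Directed (· ⊇ ·) fun a : c => Iic (a : α) := by
    rintro ⟨a, ha⟩ ⟨b, hb⟩
    rcases hc.total ha hb with hab | hba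
    · exact ⟨⟨a, ha⟩, subset_rfl, Iic_subset_Iic.2 hab⟩
    · exact ⟨⟨b, hb⟩, Iic_subset_Iic.2 hba, subset_rfl⟩
  have hempty : D ∩ ⋂ a : c, Iic (a : α) = ∅ := eq_empty_iff_forall_notMem.2
    fun w ⟨hwD, hw⟩ => hno w hwD fun a ha => mem_iInter.1 hw ⟨a, ha⟩
  obtain ⟨⟨a, ha⟩, hae⟩ := hD.elim_directed_family_closed _ (fun _ => isClosed_Iic) hempty hdir
  exact (h a ha).ne_empty (by rwa [inter_comm])

theorem exists_minimal_forall_Iic_inter_nonempty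
    (hsup : ∀ A : Set α, A.Nonempty → ∃ s, IsLUB A s) {κ : Type*} [Nonempty κ]
    {D : κ → Set α} (hD : ∀ k, IsCompact (D k)) {b : α} (hb : ∀ k, (Iic b ∩ D k).Nonempty) :
    ∃ a, Minimal (fun a => ∀ k, (Iic a ∩ D k).Nonempty) a := by
  set S : Set αᵒᵈ := {a | ∀ k, (Iic (OrderDual.ofDual a) ∩ D k).Nonempty}
  have hchain : ∀ c ⊆ S, IsChain (· ≤ ·) c → ∀ a ∈ c, ∃ lb ∈ S, ∀ z ∈ c, z ≤ lb := by
    intro c hcS hc a ha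
    obtain ⟨k₀⟩ := ‹Nonempty κ›
    have hc' : IsChain (· ≤ ·) (OrderDual.toDual ⁻¹' c) := fun x hx y hy hxy =>
      (hc hx hy hxy).symm
    have hlb : ∀ k, ∃ w ∈ D k, w ∈ lowerBounds (OrderDual.toDual ⁻¹' c) := fun k =>
      hc'.exists_mem_lowerBounds_of_isCompact ⟨a, ha⟩ (hD k) fun a ha => hcS ha k
    obtain ⟨w₀, -, hw₀⟩ := hlb k₀
    obtain ⟨m, hm⟩ := hsup _ ⟨w₀, hw₀⟩
    refine ⟨OrderDual.toDual m, fun k => ?_, fun z hz => (isLUB_lowerBounds.1 hm).1 hz⟩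
    obtain ⟨w, hwD, hw⟩ := hlb k
    exact ⟨w, hm.1 hw, hwD⟩
  obtain ⟨m, -, hm⟩ := zorn_le_nonempty₀ S hchain (OrderDual.toDual b) hb
  exact ⟨_, maximal_toDual.1 hm⟩

end ClosedIic

namespace Topology.IsUpper

variable {α : Type*}

section Preorder

variable [Preorder α] [TopologicalSpace α] [IsUpper α]

theorem _root_.IsSaturatedSet.isUpperSet {A : Set α} (h : IsSaturatedSet A) : IsUpperSet A := by
  rw [h]
  exact isUpperSet_sInter fun V hV => isUpperSet_of_isOpen hV.1

theorem le_nhds_of_isLUB {f : Filter α} {A : Set α} {s : α} (hA : ∀ a ∈ A, f ≤ 𝓝 a)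
    (hs : IsLUB A s) : f ≤ 𝓝 s := by
  rw [← Filter.tendsto_id', tendsto_nhds_iff_not_le]
  intro y hsy
  obtain ⟨a, ha, hay⟩ : ∃ a ∈ A, ¬a ≤ y := by
    by_contra! h
    exact hsy (hs.2 h)
  exact tendsto_nhds_iff_not_le.1 (Filter.tendsto_id'.2 (hA a ha)) y hay

theorem isCompact_iInter_of_isUpperSet (hsup : ∀ A : Set α, A.Nonempty → ∃ s, IsLUB A s)
    {ι : Type*} [Nonempty ι] {K : ι → Set α} (hK : ∀ i, IsCompact (K i))
    (hup : ∀ i, IsUpperSet (K i)) : IsCompact (⋂ i, K i) := by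
  rw [isCompact_iff_ultrafilter_le_nhds]
  intro f hf
  have : ∀ i, ∃ x ∈ K i, ↑f ≤ 𝓝 x := fun i =>
    (hK i).ultrafilter_le_nhds f (hf.trans (Filter.principal_mono.2 (iInter_subset K i)))
  choose x hxK hxf using this
  obtain ⟨s, hs⟩ := hsup (range x) (range_nonempty x)
  exact ⟨s, mem_iInter.2 fun i => hup i (hs.1 (mem_range_self i)) (hxK i),
    le_nhds_of_isLUB (forall_mem_range.2 hxf) hs⟩

theorem exists_subset_of_directed_of_iInter_subset
    (hsup : ∀ A : Set α, A.Nonempty → ∃ s, IsLUB A s) {κ : Type*} [Nonempty κ]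
    {Q : κ → Set α} (hdir : Directed (· ⊇ ·) Q) (hQc : ∀ k, IsCompact (Q k))
    (hQu : ∀ k, IsUpperSet (Q k)) {U : Set α} (hU : IsOpen U) (hsub : ⋂ k, Q k ⊆ U) :
    ∃ k, Q k ⊆ U := by
  by_contra! hcon
  obtain ⟨k₀⟩ := ‹Nonempty κ›
  set D : κ → Set α := fun k => Q k ∩ Uᶜ
  have hD : ∀ k, IsCompact (D k) := fun k => (hQc k).inter_right hU.isClosed_compl
  have hDne : ∀ k, (D k).Nonempty := fun k => not_subset.1 (hcon k)
  obtain ⟨top, htop⟩ := hsup univ ⟨_, mem_univ (hDne k₀).some⟩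
  obtain ⟨a, ha⟩ := exists_minimal_forall_Iic_inter_nonempty hsup hD (b := top)
    fun k => (hDne k).mono fun y hy => ⟨htop.1 (mem_univ y), hy⟩
  have haQ : a ∈ ⋂ k, Q k := mem_iInter.2 fun k =>
    let ⟨_, hya, hyQ, _⟩ := ha.prop k
    hQu k hya hyQ
  obtain ⟨_, ⟨T, hTfin, rfl⟩, haT, hTU⟩ :=
    IsUpper.isTopologicalBasis.exists_subset_of_mem_open (hsub haQ) hU
  -- `Uᶜ ⊆ ↓T` and `Q` is directed, so a single `t ∈ T` catches witnesses for every `k`.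
  obtain ⟨t, htT, ht⟩ : ∃ t ∈ T, ∀ k, (Iic a ∩ Iic t ∩ D k).Nonempty := by
    by_contra! hno
    choose! kt hkt using hno
    obtain ⟨k, hk⟩ := hdir.finite_set_le (hTfin.image kt)
    obtain ⟨y, hya, hyQ, hyU⟩ := ha.prop k
    obtain ⟨t, htT, hyt⟩ := mem_lowerClosure.1 (not_not.1 fun h => hyU (hTU h))
    exact not_nonempty_iff_eq_empty.2 (hkt t htT)
      ⟨y, ⟨hya, hyt⟩, hk (kt t) (mem_image_of_mem kt htT) hyQ, hyU⟩
  obtain ⟨m, hm⟩ := hsup (Iic a ∩ Iic t) ((ht k₀).mono inter_subset_left)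
  have ham : a ≤ m := ha.le_of_le (fun k => (ht k).mono fun y hy => ⟨hm.1 hy.1, hy.2⟩)
    (hm.2 fun _ hx => hx.1)
  exact haT (mem_lowerClosure.2 ⟨t, htT, ham.trans (hm.2 fun _ hx => hx.2)⟩)

end Preorder

end Topology.IsUpper

theorem upper_strongRSpace_of_supComplete_general {P : Type*} [PartialOrder P]
    (hsup : ∀ A : Set P, A.Nonempty → ∃ s, IsLUB A s)
    {ι : Type*} [Nonempty ι] (K : ι → Set (WithUpper P))
    (hcpt : ∀ i, IsCompact (K i))
    (hsat : ∀ i, IsSaturatedSet (K i))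
    (U : Set (WithUpper P)) (hU : IsOpen U) (hsub : (⋂ i, K i) ⊆ U) :
    ∃ I₀ : Finset ι, I₀.Nonempty ∧ (⋂ i ∈ I₀, K i) ⊆ U := by
  classical
  obtain ⟨i₀⟩ := ‹Nonempty ι›
  have : Nonempty {F : Finset ι // F.Nonempty} := ⟨⟨{i₀}, Finset.singleton_nonempty i₀⟩⟩
  have hKu : ∀ i, IsUpperSet (K i) := fun i => (hsat i).isUpperSet
  have hdir : Directed (· ⊇ ·) fun F : {F : Finset ι // F.Nonempty} => ⋂ i ∈ F.1, K i :=
    fun F G => ⟨⟨F.1 ∪ G.1, F.2.mono Finset.subset_union_left⟩,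
      biInter_subset_biInter_left fun _ => Finset.mem_union_left _,
      biInter_subset_biInter_left fun _ => Finset.mem_union_right _⟩
  have hQc : ∀ F : {F : Finset ι // F.Nonempty}, IsCompact (⋂ i ∈ F.1, K i) := fun F => by
    have := F.2.coe_sort
    simpa only [iInter_subtype] using IsUpper.isCompact_iInter_of_isUpperSet (α := WithUpper P)
      hsup (K := fun i : F.1 => K i) (fun i => hcpt i) fun i => hKu i
  have hQsub : ⋂ F : {F : Finset ι // F.Nonempty}, ⋂ i ∈ F.1, K i ⊆ U :=
    (subset_iInter fun i => (iInter_subset _ ⟨{i}, Finset.singleton_nonempty i⟩).trans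
      (biInter_subset_of_mem (Finset.mem_singleton_self i))).trans hsub
  obtain ⟨⟨I₀, hI₀⟩, hI₀U⟩ := IsUpper.exists_subset_of_directed_of_iInter_subset
    (α := WithUpper P) hsup hdir hQc (fun F => isUpperSet_iInter₂ fun i _ => hKu i) hU hQsub
  exact ⟨I₀, hI₀, hI₀U⟩

/-- For a sup-complete poset `P`, the space `(P, υ(P))` is a strong
R-space. -/
theorem upper_strongRSpace_of_supComplete {P : Type*} [PartialOrder P]
    (hsup : ∀ A : Set P, A.Nonempty → ∃ s, IsLUB A s)
    {ι : Type*} [Nonempty ι] (K : ι → Set (WithUpper P))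
    (hne : ∀ i, (K i).Nonempty) (hcpt : ∀ i, IsCompact (K i))
    (hsat : ∀ i, IsSaturatedSet (K i))
    (U : Set (WithUpper P)) (hU : IsOpen U) (hsub : (⋂ i, K i) ⊆ U) :
    ∃ I₀ : Finset ι, I₀.Nonempty ∧ (⋂ i ∈ I₀, K i) ⊆ U :=
  upper_strongRSpace_of_supComplete_general hsup K hcpt hsat U hU hsub
end

section
/- For a sup-complete poset P, the space (P, υ(P)) with the upper topology is strongly well-filtered: for every filtered family {K_d : d ∈ D} of nonempty compact saturated sets, every nonempty compact saturated K, and every open U, ⋂_{d∈D} K_d ∩ K ⊆ U implies K_d ∩ K ⊆ U for some d ∈ D. -/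
open Topology

/-!
Compact saturated sets of the upper topology are compact upper sets, and when binary joins exist
the intersection of two of them is again compact, because an ultrafilter converging to `a` and to
`b` also converges to their join. If every `Kd d ∩ K` met the closed set `Uᶜ`, Zorn's lemma would
give a minimal closed set `A ⊆ Uᶜ` meeting all of them. Filteredness makes `A` irreducible, and in
the upper topology the supremum of an irreducible set lies in its closure, so `sup A ∈ A`. Lying
above a point of each `Kd d ∩ K`, `sup A` belongs to `(⋂ d, Kd d) ∩ K ⊆ U`: a contradiction.
-/

open Set Filter

section MinimalClosed

variable {X ι : Type*} [TopologicalSpace X] {E : ι → Set X}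

theorem exists_minimal_isClosed_inter_nonempty (hE : ∀ i, IsCompact (E i)) {F : Set X}
    (hF : IsClosed F) (hFE : ∀ i, (F ∩ E i).Nonempty) :
    ∃ A ⊆ F, Minimal (fun A => IsClosed A ∧ ∀ i, (A ∩ E i).Nonempty) A := by
  refine zorn_superset_nonempty _ (fun c hcS hchain hc => ?_) F ⟨hF, hFE⟩
  refine ⟨⋂₀ c, ⟨isClosed_sInter fun A hA => (hcS hA).1, fun i => ?_⟩,
    fun A => sInter_subset_of_mem⟩
  have : Nonempty c := hc.to_subtype
  rw [inter_comm, nonempty_iff_ne_empty, sInter_eq_iInter]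
  intro hempty
  obtain ⟨⟨A, hAc⟩, hA⟩ := (hE i).elim_directed_family_closed (fun A : c => A.1)
    (fun A => (hcS A.2).1) hempty
    (IsChain.directed (f := id) (r := fun A B : Set X => A ⊇ B) hchain.symm)
  exact (inter_comm A _ ▸ (hcS hAc).2 i).ne_empty hA

theorem isIrreducible_of_minimal_isClosed_inter_nonempty [Nonempty ι]
    (hE : Directed (· ⊇ ·) E) {A : Set X}
    (hA : Minimal (fun A => IsClosed A ∧ ∀ i, (A ∩ E i).Nonempty) A) : IsIrreducible A := by
  obtain ⟨i⟩ := ‹Nonempty ι›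
  refine ⟨(hA.1.2 i).mono inter_subset_left, ?_⟩
  have avoid : ∀ Z, IsClosed Z → ¬A ⊆ Z → ∃ i, A ∩ Z ∩ E i = ∅ := by
    intro Z hZ hAZ
    by_contra! h
    exact hAZ (hA.le_of_le ⟨hA.1.1.inter hZ, h⟩ inter_subset_left |>.trans inter_subset_right)
  rw [isPreirreducible_iff_isClosed_union_isClosed]
  intro Z₁ Z₂ hZ₁ hZ₂ hcover
  by_contra! ⟨hA₁, hA₂⟩
  obtain ⟨i₁, hi₁⟩ := avoid Z₁ hZ₁ hA₁
  obtain ⟨i₂, hi₂⟩ := avoid Z₂ hZ₂ hA₂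
  obtain ⟨k, hk₁, hk₂⟩ := hE i₁ i₂
  obtain ⟨x, hxA, hxE⟩ := hA.1.2 k
  rcases hcover hxA with hx | hx
  · exact hi₁.subset ⟨⟨hxA, hx⟩, hk₁ hxE⟩
  · exact hi₂.subset ⟨⟨hxA, hx⟩, hk₂ hxE⟩

end MinimalClosed

section ClosedIic

variable {α : Type*} [Preorder α] [TopologicalSpace α] [ClosedIicTopology α]

theorem IsIrreducible.exists_subset_Iic_of_subset_lowerClosure {A t : Set α}
    (hA : IsIrreducible A) (ht : t.Finite) (hAt : A ⊆ lowerClosure t) :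
    ∃ a ∈ t, A ⊆ Iic a := by
  obtain ⟨_, hz, hAz⟩ := isIrreducible_iff_sUnion_isClosed.1 hA (ht.toFinset.image Iic)
    (by simp [isClosed_Iic]) (by simpa [coe_lowerClosure] using hAt)
  obtain ⟨a, hat, rfl⟩ := by simpa using hz
  exact ⟨a, hat, hAz⟩

end ClosedIic

namespace Topology.IsUpper

variable {α : Type*} [Preorder α] [TopologicalSpace α] [IsUpper α]

theorem isUpperSet_of_isSaturatedSet {A : Set α} (hA : IsSaturatedSet A) : IsUpperSet A :=
  hA ▸ isUpperSet_sInter fun _ hU => isUpperSet_of_isOpen hU.1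

theorem le_nhds_of_isLUB_pair {l : Filter α} {a b z : α} (hz : IsLUB {a, b} z)
    (ha : l ≤ 𝓝 a) (hb : l ≤ 𝓝 b) : l ≤ 𝓝 z := by
  refine tendsto_nhds_iff_not_le (f := id).2 fun y hzy => ?_
  have : ¬a ≤ y ∨ ¬b ≤ y := by
    contrapose! hzy
    exact hz.2 (by simp [upperBounds, hzy.1, hzy.2])
  rcases this with hay | hby
  · exact tendsto_nhds_iff_not_le.1 ha y hay
  · exact tendsto_nhds_iff_not_le.1 hb y hby

theorem isCompact_inter_of_isUpperSet (hpair : ∀ a b : α, ∃ z, IsLUB {a, b} z)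
    {Q K : Set α} (hQ : IsCompact Q) (hK : IsCompact K) (hQu : IsUpperSet Q)
    (hKu : IsUpperSet K) : IsCompact (Q ∩ K) := by
  refine isCompact_iff_ultrafilter_le_nhds.2 fun l hl => ?_
  obtain ⟨a, haQ, ha⟩ := hQ.ultrafilter_le_nhds l (hl.trans (principal_mono.2 inter_subset_left))
  obtain ⟨b, hbK, hb⟩ := hK.ultrafilter_le_nhds l (hl.trans (principal_mono.2 inter_subset_right))
  obtain ⟨z, hz⟩ := hpair a b
  exact ⟨z, ⟨hQu (hz.1 (by simp)) haQ, hKu (hz.1 (by simp)) hbK⟩, le_nhds_of_isLUB_pair hz ha hb⟩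

theorem _root_.IsIrreducible.isLUB_mem_closure {A : Set α} {s : α} (hA : IsIrreducible A)
    (hs : IsLUB A s) : s ∈ closure A := by
  rw [IsUpper.isTopologicalBasis.mem_closure_iff]
  rintro _ ⟨t, ht, rfl⟩ hst
  by_contra! hdisj
  obtain ⟨a, hat, hAa⟩ := hA.exists_subset_Iic_of_subset_lowerClosure ht fun x hxA =>
    by_contra fun hxt => hdisj.subset ⟨hxt, hxA⟩
  exact hst (mem_lowerClosure.2 ⟨a, hat, hs.2 hAa⟩)

end Topology.IsUpper

theorem upper_stronglyWellFiltered_of_supComplete_general {P : Type*} [PartialOrder P]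
    (hsup : ∀ A : Set P, A.Nonempty → ∃ s, IsLUB A s)
    {D : Type*} [Nonempty D] (Kd : D → Set (WithUpper P))
    (hcpt : ∀ d, IsCompact (Kd d))
    (hsat : ∀ d, IsSaturatedSet (Kd d))
    (hfil : ∀ d₁ d₂ : D, ∃ d₃ : D, Kd d₃ ⊆ Kd d₁ ∩ Kd d₂)
    (K : Set (WithUpper P)) (hK : IsCompact K)
    (hKsat : IsSaturatedSet K)
    (U : Set (WithUpper P)) (hU : IsOpen U) (hsub : (⋂ d, Kd d) ∩ K ⊆ U) :
    ∃ d, Kd d ∩ K ⊆ U := by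
  by_contra! hcon
  set E : D → Set (WithUpper P) := fun d => Kd d ∩ K
  have hKdu d := IsUpper.isUpperSet_of_isSaturatedSet (hsat d)
  have hKu := IsUpper.isUpperSet_of_isSaturatedSet hKsat
  have hEcpt d : IsCompact (E d) :=
    IsUpper.isCompact_inter_of_isUpperSet (α := WithUpper P)
      (fun a b => hsup {a, b} (insert_nonempty _ _)) (hcpt d) hK (hKdu d) hKu
  have hEdir : Directed (· ⊇ ·) E := fun d₁ d₂ => by
    obtain ⟨d₃, hd₃⟩ := hfil d₁ d₂
    exact ⟨d₃, inter_subset_inter_left _ (hd₃.trans inter_subset_left),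
      inter_subset_inter_left _ (hd₃.trans inter_subset_right)⟩
  obtain ⟨A, hAU, hAmin⟩ := exists_minimal_isClosed_inter_nonempty hEcpt hU.isClosed_compl
    fun d => let ⟨x, hx, hxU⟩ := not_subset.1 (hcon d); ⟨x, hxU, hx⟩
  have hAirr := isIrreducible_of_minimal_isClosed_inter_nonempty hEdir hAmin
  obtain ⟨s, hs⟩ := hsup A hAirr.nonempty
  have hsA : s ∈ A := hAmin.1.1.closure_eq ▸ hAirr.isLUB_mem_closure hs
  have hsE d : s ∈ E d := by
    obtain ⟨x, hxA, hxKd, hxK⟩ := hAmin.1.2 d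
    exact ⟨hKdu d (hs.1 hxA) hxKd, hKu (hs.1 hxA) hxK⟩
  exact hAU hsA (hsub ⟨mem_iInter.2 fun d => (hsE d).1, (hsE (Classical.arbitrary D)).2⟩)

/-- For a sup-complete poset `P`, the space `(P, υ(P))` is strongly
well-filtered. -/
theorem upper_stronglyWellFiltered_of_supComplete {P : Type*} [PartialOrder P]
    (hsup : ∀ A : Set P, A.Nonempty → ∃ s, IsLUB A s)
    {D : Type*} [Nonempty D] (Kd : D → Set (WithUpper P))
    (hne : ∀ d, (Kd d).Nonempty) (hcpt : ∀ d, IsCompact (Kd d))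
    (hsat : ∀ d, IsSaturatedSet (Kd d))
    (hfil : ∀ d₁ d₂ : D, ∃ d₃ : D, Kd d₃ ⊆ Kd d₁ ∩ Kd d₂)
    (K : Set (WithUpper P)) (hKne : K.Nonempty) (hK : IsCompact K)
    (hKsat : IsSaturatedSet K)
    (U : Set (WithUpper P)) (hU : IsOpen U) (hsub : (⋂ d, Kd d) ∩ K ⊆ U) :
    ∃ d, Kd d ∩ K ⊆ U :=
  upper_stronglyWellFiltered_of_supComplete_general hsup Kd hcpt hsat hfil K hK hKsat U hU hsub
end

section
/- Let P = {b_n : n ∈ ℕ⁺} ∪ {⊥₁, ⊥₂} be the poset with b_{n+1} < b_n for all n, ⊥₁ < b_n and ⊥₂ < b_n for all n, and ⊥₁, ⊥₂ incomparable. Then in the upper topology υ(P), the set {b_n : n ∈ ℕ⁺} = ↑⊥₁ ∩ ↑⊥₂ is not compact; in particular (P, υ(P)) is not coherent, even though ↑⊥₁ and ↑⊥₂ are compact saturated. -/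
/-!
In the upper topology every open set is an upper set and `↓t` is closed, so the
neighbourhood kernel of `{x}` is `↑x`; being the kernel of a compact set, `↑x` is compact and
saturated. A compact set `S` that is directed downwards has a least element: otherwise the
complements of `↓t`, `t ∈ S`, form a directed open cover of `S` with no member covering `S`.
The chain `b₀ > b₁ > ⋯` is directed downwards and has no least element.
-/

open Topology

/-- The poset `P = {b_n : n ∈ ℕ⁺} ∪ {⊥₁, ⊥₂}` (`b 0, b 1, ...` is the descending
chain `b₁ > b₂ > ...`). -/
inductive Pex where
  | b : ℕ → Pex
  | bot1 : Pex
  | bot2 : Pex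

/-- The order: `b_{n+1} < b_n`, `⊥₁ < b_n`, `⊥₂ < b_n`, `⊥₁` and `⊥₂`
incomparable. -/
def Pex.le : Pex → Pex → Prop
  | .b n, .b m => m ≤ n
  | .bot1, .bot1 => True
  | .bot2, .bot2 => True
  | .bot1, .b _ => True
  | .bot2, .b _ => True
  | _, _ => False

instance : PartialOrder Pex where
  le := Pex.le
  le_refl a := by cases a <;> simp [Pex.le]
  le_trans a b c hab hbc := by
    cases a <;> cases b <;> cases c <;> simp_all [Pex.le] <;> omega
  le_antisymm a b hab hba := by
    cases a <;> cases b <;> simp_all [Pex.le] <;> omega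

open Set WithUpper

lemma isSaturatedSet_nhdsKer {X : Type*} [TopologicalSpace X] (s : Set X) :
    IsSaturatedSet (nhdsKer s) :=
  (nhdsKer_nhdsKer s).symm.trans (nhdsKer_def _)

namespace Topology.IsUpper

variable {α : Type*} [Preorder α] [TopologicalSpace α] [IsUpper α]

lemma nhdsKer_singleton (a : α) : nhdsKer {a} = Ici a := by
  ext x
  rw [mem_nhdsKer_singleton, specializes_iff_mem_closure, closure_singleton]
  rfl

lemma exists_isLeast_of_isCompact {s : Set α} (hs : IsCompact s) (hne : s.Nonempty)
    (hdir : DirectedOn (· ≥ ·) s) : ∃ a, IsLeast s a := by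
  by_contra! hleast
  have : Nonempty s := hne.to_subtype
  have hcover : s ⊆ ⋃ t : s, (Iic (t : α))ᶜ := fun x hx => by
    obtain ⟨t, ht, hxt⟩ : ∃ t ∈ s, ¬ x ≤ t := by
      simpa [IsLeast, lowerBounds, hx] using hleast x
    exact mem_iUnion.2 ⟨⟨t, ht⟩, hxt⟩
  have hdirected : Directed (· ⊆ ·) fun t : s => (Iic (t : α))ᶜ := fun t u => by
    obtain ⟨c, hc, hct, hcu⟩ := hdir t t.2 u u.2
    exact ⟨⟨c, hc⟩, compl_subset_compl.2 (Iic_subset_Iic.2 hct),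
      compl_subset_compl.2 (Iic_subset_Iic.2 hcu)⟩
  obtain ⟨t, ht⟩ :=
    hs.elim_directed_cover _ (fun _ => isClosed_Iic.isOpen_compl) hcover hdirected
  exact ht t.2 le_rfl

lemma isCompact_Ici (a : α) : IsCompact (Ici a) :=
  nhdsKer_singleton a ▸ isCompact_singleton.nhdsKer

lemma isSaturatedSet_Ici (a : α) : IsSaturatedSet (Ici a) :=
  nhdsKer_singleton a ▸ isSaturatedSet_nhdsKer {a}

end Topology.IsUpper

namespace Pex

lemma b_le_b_iff {m n : ℕ} : b m ≤ b n ↔ n ≤ m := Iff.rfl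

lemma bot1_le_b (n : ℕ) : bot1 ≤ b n := trivial
lemma bot2_le_b (n : ℕ) : bot2 ≤ b n := trivial
lemma not_bot1_le_bot2 : ¬ bot1 ≤ bot2 := id
lemma not_bot2_le_bot1 : ¬ bot2 ≤ bot1 := id

lemma Ici_bot1_inter_Ici_bot2 :
    Ici (toUpper bot1) ∩ Ici (toUpper bot2) = {x : WithUpper Pex | ∃ n, x = toUpper (b n)} := by
  ext x
  induction x with | toUpper x =>
  cases x with
  | b n => simp [bot1_le_b, bot2_le_b]
  | bot1 => simp [not_bot2_le_bot1]
  | bot2 => simp [not_bot1_le_bot2]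

lemma directedOn_ge_toUpper_b :
    DirectedOn (· ≥ ·) {x : WithUpper Pex | ∃ n, x = toUpper (b n)} := by
  rintro _ ⟨m, rfl⟩ _ ⟨n, rfl⟩
  exact ⟨toUpper (b (max m n)), ⟨_, rfl⟩,
    toUpper_le_toUpper.2 (b_le_b_iff.2 (le_max_left m n)),
    toUpper_le_toUpper.2 (b_le_b_iff.2 (le_max_right m n))⟩

lemma not_isLeast_toUpper_b (x : WithUpper Pex) :
    ¬ IsLeast {x : WithUpper Pex | ∃ n, x = toUpper (b n)} x := by
  rintro ⟨⟨n, rfl⟩, hleast⟩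
  exact Nat.not_succ_le_self n (b_le_b_iff.1 (toUpper_le_toUpper.1 (hleast ⟨n + 1, rfl⟩)))

end Pex

/-- In `(P, υ(P))`, the sets `↑⊥₁` and `↑⊥₂` are compact saturated,
their intersection is `{b_n : n ∈ ℕ⁺}`, which is not compact; in particular
`(P, υ(P))` is not coherent. -/
theorem upper_Pex_not_coherent :
    IsCompact (Set.Ici (WithUpper.toUpper Pex.bot1)) ∧
    IsSaturatedSet (Set.Ici (WithUpper.toUpper Pex.bot1)) ∧
    IsCompact (Set.Ici (WithUpper.toUpper Pex.bot2)) ∧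
    IsSaturatedSet (Set.Ici (WithUpper.toUpper Pex.bot2)) ∧
    Set.Ici (WithUpper.toUpper Pex.bot1) ∩ Set.Ici (WithUpper.toUpper Pex.bot2) =
      {x : WithUpper Pex | ∃ n : ℕ, x = WithUpper.toUpper (Pex.b n)} ∧
    ¬ IsCompact {x : WithUpper Pex | ∃ n : ℕ, x = WithUpper.toUpper (Pex.b n)} := by
  refine ⟨IsUpper.isCompact_Ici _, IsUpper.isSaturatedSet_Ici _, IsUpper.isCompact_Ici _,
    IsUpper.isSaturatedSet_Ici _, Pex.Ici_bot1_inter_Ici_bot2, fun hcompact => ?_⟩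
  obtain ⟨x, hx⟩ := IsUpper.exists_isLeast_of_isCompact hcompact ⟨_, 0, rfl⟩
    Pex.directedOn_ge_toUpper_b
  exact Pex.not_isLeast_toUpper_b x hx
end
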